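/- arXiv:1711.02576 — 2 statements merged into one kernel-verified Lean document; each statement's English description precedes it below -/
import Mathlib

section
/- Let M = max{|a_k| : 1 ≤ k ≤ n−1}, let m = max{k ∈ {1, …, n−1} : |a_k| = M}, and let F be the Frobenius companion matrix of p. Suppose n ≥ 3 and 1 ≤ b ≤ n−2. Then ‖X_b‖_1 < N(F) if and only if 1 < |a_0| < 1 + M, m ≤ b, and |a_{b+1}| + |a_b|/|a_0| < M. -/
/-!
The column sums of `X_b` are explicit: `|a₀|`, `1`, `|a_{b+1}| + 1 + |a_b|/|a₀|`,
`|a_k| + 1` for `b + 2 ≤ k ≤ n - 1`, and `1 + |a_k|/|a₀|` for `1 ≤ k ≤ b - 1`.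
Comparing each of them with `1 + M` shows that `‖X_b‖₁ < 1 + M` is equivalent to the stated
conditions. On the other side `N(F) ≤ ‖F‖₁ = max(|a₀|, 1 + M)`, while the column of `a_m` and the
last row of `F` give `N(F) ≥ min(1, |a₀|) + M`. Since `‖X_b‖₁ ≥ |a₀|`, and the conditions force
`|a₀| > 1`, both `‖X_b‖₁ < N(F)` and the conditions are equivalent to `‖X_b‖₁ < 1 + M`.
-/

noncomputable section

/-- Maximum absolute row sum (the `∞`-norm). -/
def infNorm {n : ℕ} (A : Matrix (Fin n) (Fin n) ℂ) : ℝ :=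
  ⨆ i, ∑ j, ‖A i j‖

/-- Maximum absolute column sum (the `1`-norm). -/
def oneNorm {n : ℕ} (A : Matrix (Fin n) (Fin n) ℂ) : ℝ :=
  ⨆ j, ∑ i, ‖A i j‖

/-- `N(A) = min {‖A‖_∞, ‖A‖_1}`. -/
def NN {n : ℕ} (A : Matrix (Fin n) (Fin n) ℂ) : ℝ :=
  min (infNorm A) (oneNorm A)

/-- The monic polynomial `p(x) = x^n + a_{n-1}x^{n-1} + ⋯ + a_1 x + a_0`. -/
def pPoly (n : ℕ) (a : ℕ → ℂ) : Polynomial ℂ :=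
  Polynomial.X ^ n + ∑ k ∈ Finset.range n, Polynomial.C (a k) * Polynomial.X ^ k

/-- Coefficients of the monic reversal polynomial `p♯`:
`asharp n a k` is the coefficient of `x^k` in `p♯`, namely `1/a_0` for `k = 0`
and `a_{n-k}/a_0` for `1 ≤ k ≤ n-1`. -/
def asharp (n : ℕ) (a : ℕ → ℂ) : ℕ → ℂ :=
  fun k => if k = 0 then 1 / a 0 else a (n - k) / a 0

/-- A unit sparse companion matrix of `p` in Hessenberg form, with explicit data:
`m` (0-based; `m + 1 ≤ n`), and 0-based positions `(r k, c k)` (for `k = 0, …, n-1`)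
satisfying `r k - c k = k`, `m ≤ r k ≤ n-1`, `0 ≤ c k ≤ m`; the superdiagonal
entries are `1`, the entry at `(r k, c k)` is `-a_{n-1-k}`, and all other entries
are `0`.  (This is the 0-based translation of the 1-based description.) -/
def IsUnitSparseData (n m : ℕ) (a : ℕ → ℂ) (C : Matrix (Fin n) (Fin n) ℂ)
    (r c : Fin n → Fin n) : Prop :=
  m + 1 ≤ n ∧
  (∀ k : Fin n, (r k : ℕ) = (c k : ℕ) + (k : ℕ)) ∧
  (∀ k : Fin n, m ≤ (r k : ℕ)) ∧
  (∀ k : Fin n, (c k : ℕ) ≤ m) ∧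
  (∀ k : Fin n, C (r k) (c k) = -a (n - 1 - (k : ℕ))) ∧
  (∀ i j : Fin n, (j : ℕ) = (i : ℕ) + 1 → C i j = 1) ∧
  (∀ i j : Fin n, (j : ℕ) ≠ (i : ℕ) + 1 →
    (∀ k : Fin n, ¬(r k = i ∧ c k = j)) → C i j = 0)

/-- A unit sparse companion matrix of `p` in Hessenberg form. -/
def IsUnitSparse (n : ℕ) (a : ℕ → ℂ) (C : Matrix (Fin n) (Fin n) ℂ) : Prop :=
  ∃ (m : ℕ) (r c : Fin n → Fin n), IsUnitSparseData n m a C r c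

/-- A Fiedler companion matrix of `p` in Hessenberg form (with explicit position
data): a unit sparse companion matrix such that for `1 ≤ k ≤ n-1`, if `-a_{k-1}`
occupies position `(i,j)` then `-a_k` occupies position `(i-1,j)` or `(i,j+1)`.
Here the coefficient `-a_{n-1-k}` sits at position index `k`, so the coefficient
`-a_{k-1}` has index `k' = n-k` and `-a_k` has index `n-1-k = k' - 1`. -/
def IsFiedlerData (n m : ℕ) (a : ℕ → ℂ) (C : Matrix (Fin n) (Fin n) ℂ)
    (r c : Fin n → Fin n) : Prop :=
  IsUnitSparseData n m a C r c ∧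
  ∀ k k' : Fin n, (k' : ℕ) = (k : ℕ) + 1 →
    ((r k : ℕ) + 1 = (r k' : ℕ) ∧ c k = c k') ∨
    (r k = r k' ∧ (c k : ℕ) = (c k' : ℕ) + 1)

/-- The Frobenius companion matrix of the monic polynomial with coefficients `a`
(0-based: superdiagonal `1`'s and last row `-a_0, -a_1, …, -a_{n-1}`). -/
def Frob (n : ℕ) (a : ℕ → ℂ) : Matrix (Fin n) (Fin n) ℂ :=
  Matrix.of fun i j =>
    if (j : ℕ) = (i : ℕ) + 1 then 1
    else if (i : ℕ) = n - 1 then -a (j : ℕ)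
    else 0

/-- The Fiedler companion matrix `L_b` (0-based translation): superdiagonal `1`'s,
`(L_b)_{i,b} = -a_{n+b-1-i}` for `b ≤ i ≤ n-2`, and `(L_b)_{n-1,j} = -a_j` for
`0 ≤ j ≤ b`; all other entries `0`. -/
def Lmat (n b : ℕ) (a : ℕ → ℂ) : Matrix (Fin n) (Fin n) ℂ :=
  Matrix.of fun i j =>
    if (j : ℕ) = (i : ℕ) + 1 then 1
    else if (i : ℕ) = n - 1 ∧ (j : ℕ) ≤ b then -a (j : ℕ)
    else if (j : ℕ) = b ∧ b ≤ (i : ℕ) ∧ (i : ℕ) + 2 ≤ n then -a (n + b - 1 - (i : ℕ))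
    else 0

/-- The matrix `W` (0-based translation): `W_{0,0} = -a_{n-1}`, `W_{0,n-1} = -a_0`,
`W_{i,i-1} = 1` for `1 ≤ i ≤ n-1`, `W_{i,0} = a_{i-1}/a_0` for `2 ≤ i ≤ n-1`;
all other entries `0`. -/
def Wmat (n : ℕ) (a : ℕ → ℂ) : Matrix (Fin n) (Fin n) ℂ :=
  Matrix.of fun i j =>
    if (i : ℕ) = 0 ∧ (j : ℕ) = 0 then -a (n - 1)
    else if (i : ℕ) = 0 ∧ (j : ℕ) = n - 1 then -a 0
    else if (i : ℕ) = (j : ℕ) + 1 then 1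
    else if 2 ≤ (i : ℕ) ∧ (j : ℕ) = 0 then a ((i : ℕ) - 1) / a 0
    else 0

/-- The matrix `X_b` (0-based translation): `(X_b)_{0,j} = -a_{n-1-j}` for
`0 ≤ j ≤ n-2-b`, `(X_b)_{0,n-1} = -a_0`, `(X_b)_{i,i-1} = 1` for `1 ≤ i ≤ n-2`,
`(X_b)_{n-1,n-2} = 1`, `(X_b)_{n-1,j} = a_{n-2-j}/a_0` for `n-2-b ≤ j ≤ n-3`;
all other entries `0`. -/
def Xmat (n b : ℕ) (a : ℕ → ℂ) : Matrix (Fin n) (Fin n) ℂ :=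
  Matrix.of fun i j =>
    if (i : ℕ) = 0 ∧ (j : ℕ) + b ≤ n - 2 then -a (n - 1 - (j : ℕ))
    else if (i : ℕ) = 0 ∧ (j : ℕ) = n - 1 then -a 0
    else if (i : ℕ) = (j : ℕ) + 1 ∧ (i : ℕ) + 2 ≤ n then 1
    else if (i : ℕ) = n - 1 ∧ (j : ℕ) = n - 2 then 1
    else if (i : ℕ) = n - 1 ∧ n - 2 ≤ (j : ℕ) + b ∧ (j : ℕ) + 3 ≤ n then
      a (n - 2 - (j : ℕ)) / a 0
    else 0

/-- A matrix `E` of type `E_c(q)` for the monic polynomial with coefficients `b`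
(0-based translation of the 1-based description): superdiagonal `1`'s,
`E_{n-1,0} = -b_0`, and positions `(r k, col k)` for `k = 0, …, n-2` with
`r k = col k + k`, `c ≤ r k`, `1 ≤ col k ≤ c`, holding `-b_{n-1-k}`; all other
entries `0`. -/
def IsTypeE (n c : ℕ) (b : ℕ → ℂ) (E : Matrix (Fin n) (Fin n) ℂ) : Prop :=
  ∃ r col : ℕ → Fin n,
    (∀ k : ℕ, k ≤ n - 2 → (r k : ℕ) = (col k : ℕ) + k) ∧
    (∀ k : ℕ, k ≤ n - 2 → c ≤ (r k : ℕ)) ∧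
    (∀ k : ℕ, k ≤ n - 2 → 1 ≤ (col k : ℕ) ∧ (col k : ℕ) ≤ c) ∧
    (∀ k : ℕ, k ≤ n - 2 → E (r k) (col k) = -b (n - 1 - k)) ∧
    (∀ i j : Fin n, (j : ℕ) = (i : ℕ) + 1 → E i j = 1) ∧
    (∀ i j : Fin n, (i : ℕ) = n - 1 → (j : ℕ) = 0 → E i j = -b 0) ∧
    (∀ i j : Fin n, (j : ℕ) ≠ (i : ℕ) + 1 → ¬((i : ℕ) = n - 1 ∧ (j : ℕ) = 0) →
      (∀ k : ℕ, k ≤ n - 2 → ¬(r k = i ∧ col k = j)) → E i j = 0)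

/-- `A` is of type `E_c(p♯)⁻¹`: `A = E⁻¹` for some `E` of type `E_c(p♯)`. -/
def IsTypeEInv (n c : ℕ) (a : ℕ → ℂ) (A : Matrix (Fin n) (Fin n) ℂ) : Prop :=
  ∃ E : Matrix (Fin n) (Fin n) ℂ, IsTypeE n c (asharp n a) E ∧ A = E⁻¹

theorem Fintype.sum_eq_add_add {ι M : Type*} [Fintype ι] [DecidableEq ι] [AddCommMonoid M]
    {f : ι → M} {x y z : ι} (hxy : x ≠ y) (hxz : x ≠ z) (hyz : y ≠ z)
    (hf : ∀ w, w ≠ x → w ≠ y → w ≠ z → f w = 0) :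
    ∑ w, f w = f x + f y + f z := by
  rw [← Finset.sum_subset (Finset.subset_univ {x, y, z}) fun w _ hw => by
      simp only [Finset.mem_insert, Finset.mem_singleton, not_or] at hw
      exact hf w hw.1 hw.2.1 hw.2.2,
    Finset.sum_insert (by simp [hxy, hxz]), Finset.sum_pair hyz, add_assoc]

section Norms

variable {n : ℕ} (A : Matrix (Fin n) (Fin n) ℂ)

theorem le_oneNorm (j : Fin n) : ∑ i, ‖A i j‖ ≤ oneNorm A :=
  le_ciSup (f := fun j => ∑ i, ‖A i j‖) (Finite.bddAbove_range _) j

theorem le_infNorm (i : Fin n) : ∑ j, ‖A i j‖ ≤ infNorm A :=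
  le_ciSup (f := fun i => ∑ j, ‖A i j‖) (Finite.bddAbove_range _) i

theorem oneNorm_lt_iff [NeZero n] {c : ℝ} : oneNorm A < c ↔ ∀ j, ∑ i, ‖A i j‖ < c := by
  refine ⟨fun h j => (le_oneNorm A j).trans_lt h, fun h => ?_⟩
  obtain ⟨j, hj⟩ := Finite.exists_max fun j => ∑ i, ‖A i j‖
  exact (ciSup_le hj).trans_lt (h j)

end Norms

section Frobenius

variable {n : ℕ} (a : ℕ → ℂ)

theorem Frob_apply_of_ne {i j : Fin n} (hj : (j : ℕ) ≠ i + 1) (hi : (i : ℕ) ≠ n - 1) :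
    Frob n a i j = 0 := by
  simp [Frob, hj, hi]

theorem Frob_colSum_zero {j : Fin n} (hj : (j : ℕ) = 0) :
    ∑ i, ‖Frob n a i j‖ = ‖a 0‖ := by
  have hn : n - 1 < n := by omega
  rw [Fintype.sum_eq_single ⟨n - 1, hn⟩ fun i hi => by
    rw [Frob_apply_of_ne a (by omega) (fun h => hi (Fin.ext h)), norm_zero]]
  simp [Frob, hj]

theorem Frob_colSum_of_pos {j : Fin n} (hj : 0 < (j : ℕ)) :
    ∑ i, ‖Frob n a i j‖ = 1 + ‖a j‖ := by
  have hj' : (j : ℕ) - 1 < n := by omega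
  have hn : n - 1 < n := by omega
  rw [Fintype.sum_eq_add ⟨(j : ℕ) - 1, hj'⟩ ⟨n - 1, hn⟩
    (fun h => by simp [Fin.ext_iff] at h; omega) fun i hi => by
      rw [Frob_apply_of_ne a (fun h => hi.1 (Fin.ext (by simp; omega)))
        (fun h => hi.2 (Fin.ext h)), norm_zero]]
  simp [Frob, show (j : ℕ) - 1 + 1 = j by omega, show (j : ℕ) ≠ n - 1 + 1 by omega]

theorem Frob_rowSum_last (hn : n - 1 < n) :
    ∑ j, ‖Frob n a ⟨n - 1, hn⟩ j‖ = ∑ k ∈ Finset.range n, ‖a k‖ := by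
  rw [← Fin.sum_univ_eq_sum_range]
  refine Finset.sum_congr rfl fun j _ => ?_
  simp [Frob, show (j : ℕ) ≠ n - 1 + 1 by omega]

theorem oneNorm_Frob_le {M : ℝ}
    (hM : ∀ k ∈ Set.Icc 1 (n - 1), ‖a k‖ ≤ M) :
    oneNorm (Frob n a) ≤ max ‖a 0‖ (1 + M) := by
  refine Real.iSup_le (fun j => ?_) ((norm_nonneg _).trans (le_max_left _ _))
  rcases Nat.eq_zero_or_pos j with hj | hj
  · exact (Frob_colSum_zero a hj).trans_le (le_max_left _ _)
  · rw [Frob_colSum_of_pos a hj]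
    exact le_max_of_le_right (by linarith [hM j ⟨hj, by omega⟩])

theorem min_one_add_le_NN_Frob {k : ℕ} (hk : k ∈ Set.Icc 1 (n - 1)) :
    min 1 ‖a 0‖ + ‖a k‖ ≤ NN (Frob n a) := by
  have hn : n - 1 < n := by grind
  have hkn : k < n := by grind
  refine le_min ?_ ?_
  · calc min 1 ‖a 0‖ + ‖a k‖ ≤ ∑ j ∈ {0, k}, ‖a j‖ := by
          rw [Finset.sum_pair (by grind)]; gcongr; exact min_le_right _ _
      _ ≤ ∑ j ∈ Finset.range n, ‖a j‖ :=
          Finset.sum_le_sum_of_subset_of_nonneg (by grind) fun _ _ _ => norm_nonneg _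
      _ = _ := (Frob_rowSum_last a hn).symm
      _ ≤ infNorm (Frob n a) := le_infNorm _ _
  · calc min 1 ‖a 0‖ + ‖a k‖ ≤ 1 + ‖a k‖ := by gcongr; exact min_le_left _ _
      _ = ∑ i, ‖Frob n a i ⟨k, hkn⟩‖ := (Frob_colSum_of_pos a (j := ⟨k, hkn⟩) hk.1).symm
      _ ≤ oneNorm (Frob n a) := le_oneNorm _ _

end Frobenius

section Xmat

variable {n b : ℕ} (a : ℕ → ℂ)

theorem Xmat_apply_of_ne {i j : Fin n} (h0 : (i : ℕ) ≠ 0) (hs : (i : ℕ) ≠ j + 1)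
    (hl : (i : ℕ) ≠ n - 1) : Xmat n b a i j = 0 := by
  rw [Xmat, Matrix.of_apply]
  split_ifs <;> first | omega | rfl

theorem Xmat_apply_col_last {i j : Fin n} (hj : (j : ℕ) = n - 1) :
    Xmat n b a i j = if (i : ℕ) = 0 then -a 0 else 0 := by
  rw [Xmat, Matrix.of_apply]
  split_ifs <;> first | omega | rfl | simp [hj]

theorem Xmat_colSum_last {j : Fin n} (hj : (j : ℕ) = n - 1) :
    ∑ i, ‖Xmat n b a i j‖ = ‖a 0‖ := by
  rw [Fintype.sum_eq_single ⟨0, by omega⟩ fun i hi => by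
    rw [Xmat_apply_col_last a hj, if_neg (Fin.val_ne_of_ne hi), norm_zero],
    Xmat_apply_col_last a hj, if_pos rfl, norm_neg]

theorem Xmat_apply_col_penult (hn : 2 ≤ n) (hb : 1 ≤ b) {i j : Fin n}
    (hj : (j : ℕ) = n - 2) : Xmat n b a i j = if (i : ℕ) = n - 1 then 1 else 0 := by
  rw [Xmat, Matrix.of_apply]
  split_ifs <;> first | omega | rfl

theorem Xmat_colSum_penult (hn : 2 ≤ n) (hb : 1 ≤ b) {j : Fin n}
    (hj : (j : ℕ) = n - 2) : ∑ i, ‖Xmat n b a i j‖ = 1 := by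
  rw [Fintype.sum_eq_single ⟨n - 1, by omega⟩ fun i hi => by
    rw [Xmat_apply_col_penult a hn hb hj, if_neg (Fin.val_ne_of_ne hi), norm_zero],
    Xmat_apply_col_penult a hn hb hj, if_pos rfl, norm_one]

theorem Xmat_apply_row_zero {i j : Fin n} (hi : (i : ℕ) = 0) (hj : (j : ℕ) + 3 ≤ n) :
    Xmat n b a i j = if (j : ℕ) + b ≤ n - 2 then -a (n - 1 - j) else 0 := by
  rw [Xmat, Matrix.of_apply]
  split_ifs <;> first | omega | rfl

theorem Xmat_apply_row_last {i j : Fin n} (hi : (i : ℕ) = n - 1) (hj : (j : ℕ) + 3 ≤ n) :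
    Xmat n b a i j = if n - 2 ≤ (j : ℕ) + b then a (n - 2 - j) / a 0 else 0 := by
  rw [Xmat, Matrix.of_apply]
  split_ifs <;> first | omega | rfl

theorem Xmat_apply_subdiag {i j : Fin n} (hi : (i : ℕ) = j + 1) (hn : (i : ℕ) + 2 ≤ n) :
    Xmat n b a i j = 1 := by
  rw [Xmat, Matrix.of_apply]
  split_ifs <;> first | omega | rfl

theorem Xmat_colSum_of_add_three_le {j : Fin n} (hj : (j : ℕ) + 3 ≤ n) :
    ∑ i, ‖Xmat n b a i j‖ =
      ‖Xmat n b a ⟨0, by omega⟩ j‖ + 1 + ‖Xmat n b a ⟨n - 1, by omega⟩ j‖ := by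
  have hrows : ∀ i : Fin n, i ≠ ⟨0, by omega⟩ → i ≠ ⟨j + 1, by omega⟩ → i ≠ ⟨n - 1, by omega⟩ →
      ‖Xmat n b a i j‖ = 0 := fun i h0 hs hl => by
    rw [Xmat_apply_of_ne a (Fin.val_ne_of_ne h0) (Fin.val_ne_of_ne hs) (Fin.val_ne_of_ne hl),
      norm_zero]
  rw [Fintype.sum_eq_add_add (Fin.ne_of_val_ne (by simp)) (Fin.ne_of_val_ne (by simp; omega))
    (Fin.ne_of_val_ne (by simp; omega)) hrows,
    Xmat_apply_subdiag a (i := ⟨j + 1, _⟩) rfl (by simp; omega), norm_one]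

theorem Xmat_colSum_eq_norm_add_one {j : Fin n} {k : ℕ} (hk : j + k + 1 = n) (hbk : b + 2 ≤ k) :
    ∑ i, ‖Xmat n b a i j‖ = ‖a k‖ + 1 := by
  rw [Xmat_colSum_of_add_three_le a (by omega), Xmat_apply_row_zero a rfl (by omega),
    Xmat_apply_row_last a rfl (by omega), if_pos (by omega), if_neg (by omega),
    show n - 1 - j = k by omega, norm_neg, norm_zero, add_zero]

theorem Xmat_colSum_eq_norm_add_one_add_norm_div (hb : 1 ≤ b) {j : Fin n} (hj : j + b + 2 = n) :
    ∑ i, ‖Xmat n b a i j‖ = ‖a (b + 1)‖ + 1 + ‖a b‖ / ‖a 0‖ := by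
  rw [Xmat_colSum_of_add_three_le a (by omega), Xmat_apply_row_zero a rfl (by omega),
    Xmat_apply_row_last a rfl (by omega), if_pos (by omega), if_pos (by omega),
    show n - 1 - j = b + 1 by omega, show n - 2 - j = b by omega, norm_neg, norm_div]

theorem Xmat_colSum_eq_one_add_norm_div {j : Fin n} {k : ℕ} (hk : j + k + 2 = n) (hk1 : 1 ≤ k)
    (hkb : k < b) : ∑ i, ‖Xmat n b a i j‖ = 1 + ‖a k‖ / ‖a 0‖ := by
  rw [Xmat_colSum_of_add_three_le a (by omega), Xmat_apply_row_zero a rfl (by omega),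
    Xmat_apply_row_last a rfl (by omega), if_neg (by omega), if_pos (by omega),
    show n - 2 - j = k by omega, norm_zero, zero_add, norm_div]

end Xmat

section Conditions

variable {n b m : ℕ} {a : ℕ → ℂ} {M : ℝ}

theorem Xmat_conditions_of_colSum_lt (ha : a 0 ≠ 0) (hm1 : 1 ≤ m) (hm2 : m ≤ n - 1)
    (hm : ‖a m‖ = M) (hb1 : 1 ≤ b) (hb2 : b ≤ n - 2)
    (h : ∀ j, ∑ i, ‖Xmat n b a i j‖ < 1 + M) :
    1 < ‖a 0‖ ∧ ‖a 0‖ < 1 + M ∧ m ≤ b ∧ ‖a (b + 1)‖ + ‖a b‖ / ‖a 0‖ < M := by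
  have hM0 : 0 ≤ M := hm ▸ norm_nonneg _
  have hlast := h ⟨n - 1, by omega⟩
  rw [Xmat_colSum_last a rfl] at hlast
  have hmid := h ⟨n - 2 - b, by omega⟩
  rw [Xmat_colSum_eq_norm_add_one_add_norm_div a hb1 (by simp; omega)] at hmid
  have hdiv : 0 ≤ ‖a b‖ / ‖a 0‖ := by positivity
  have hmb : m ≤ b := by
    by_contra! hbm
    rcases (show m = b + 1 ∨ b + 2 ≤ m by omega) with rfl | hbm
    · linarith
    · have htop := h ⟨n - 1 - m, by omega⟩
      rw [Xmat_colSum_eq_norm_add_one a (k := m) (by simp; omega) hbm] at htop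
      linarith
  refine ⟨?_, hlast, hmb, by linarith⟩
  by_contra! h0
  have hMdiv : M ≤ M / ‖a 0‖ := by
    rw [le_div_iff₀ (norm_pos_iff.mpr ha)]
    exact mul_le_of_le_one_right hM0 h0
  rcases hmb.lt_or_eq with hmb | rfl
  · have hbot := h ⟨n - 2 - m, by omega⟩
    rw [Xmat_colSum_eq_one_add_norm_div a (k := m) (by simp; omega) hm1 hmb, hm] at hbot
    linarith
  · rw [hm] at hmid
    linarith [norm_nonneg (a (m + 1))]

theorem Xmat_colSum_lt_of_conditions (hM : ∀ k ∈ Set.Icc 1 (n - 1), ‖a k‖ ≤ M)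
    (hm : ∀ k, 1 ≤ k → k ≤ n - 1 → ‖a k‖ = M → k ≤ m) (hb1 : 1 ≤ b) (hb2 : b ≤ n - 2)
    (h0 : 1 < ‖a 0‖) (h0M : ‖a 0‖ < 1 + M) (hmb : m ≤ b)
    (hmid : ‖a (b + 1)‖ + ‖a b‖ / ‖a 0‖ < M) (j : Fin n) :
    ∑ i, ‖Xmat n b a i j‖ < 1 + M := by
  have hM0 : 0 < M := by
    have : 0 ≤ ‖a (b + 1)‖ + ‖a b‖ / ‖a 0‖ := by positivity
    linarith
  obtain hj | hj | hj | hj | hj : (j : ℕ) = n - 1 ∨ (j : ℕ) = n - 2 ∨ j + b + 2 = n ∨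
      j + b + 3 ≤ n ∨ (n ≤ j + b + 1 ∧ j + 3 ≤ n) := by omega
  · rwa [Xmat_colSum_last a hj]
  · rw [Xmat_colSum_penult a (by omega) hb1 hj]
    linarith
  · rw [Xmat_colSum_eq_norm_add_one_add_norm_div a hb1 hj]
    linarith
  · rw [Xmat_colSum_eq_norm_add_one a (k := n - 1 - j) (by omega) (by omega)]
    have hk : ‖a (n - 1 - j)‖ < M := (hM _ ⟨by omega, by omega⟩).lt_of_ne fun hk => by
      have := hm _ (by omega) (by omega) hk
      omega
    linarith
  · rw [Xmat_colSum_eq_one_add_norm_div a (k := n - 2 - j) (by omega) (by omega) (by omega)]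
    have hk : ‖a (n - 2 - j)‖ / ‖a 0‖ < M := by
      rw [div_lt_iff₀ (by linarith)]
      nlinarith [hM (n - 2 - j) ⟨by omega, by omega⟩]
    linarith

theorem oneNorm_Xmat_lt_one_add_iff [NeZero n] (ha : a 0 ≠ 0)
    (hM : ∀ k ∈ Set.Icc 1 (n - 1), ‖a k‖ ≤ M) (hm1 : 1 ≤ m) (hm2 : m ≤ n - 1) (hm3 : ‖a m‖ = M)
    (hm4 : ∀ k, 1 ≤ k → k ≤ n - 1 → ‖a k‖ = M → k ≤ m) (hb1 : 1 ≤ b) (hb2 : b ≤ n - 2) :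
    oneNorm (Xmat n b a) < 1 + M ↔
      1 < ‖a 0‖ ∧ ‖a 0‖ < 1 + M ∧ m ≤ b ∧ ‖a (b + 1)‖ + ‖a b‖ / ‖a 0‖ < M := by
  rw [oneNorm_lt_iff]
  exact ⟨Xmat_conditions_of_colSum_lt ha hm1 hm2 hm3 hb1 hb2,
    fun ⟨h0, h0M, hmb, hmid⟩ => Xmat_colSum_lt_of_conditions hM hm4 hb1 hb2 h0 h0M hmb hmid⟩

end Conditions

theorem stmt18_general (n : ℕ) (a : ℕ → ℂ) (ha : a 0 ≠ 0) (M : ℝ)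
    (hM : IsGreatest ((fun k => ‖a k‖) '' (Set.Icc 1 (n - 1))) M)
    (m : ℕ) (hm1 : 1 ≤ m) (hm2 : m ≤ n - 1) (hm3 : ‖a m‖ = M)
    (hm4 : ∀ k : ℕ, 1 ≤ k → k ≤ n - 1 → ‖a k‖ = M → k ≤ m)
    (b : ℕ) (hb1 : 1 ≤ b) (hb2 : b ≤ n - 2) :
    oneNorm (Xmat n b a) < NN (Frob n a) ↔
      1 < ‖a 0‖ ∧ ‖a 0‖ < 1 + M ∧ m ≤ b ∧
        ‖a (b + 1)‖ + ‖a b‖ / ‖a 0‖ < M := by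
  have : NeZero n := ⟨by omega⟩
  have hMub : ∀ k ∈ Set.Icc 1 (n - 1), ‖a k‖ ≤ M := fun k hk => hM.2 ⟨k, hk, rfl⟩
  have hXM := oneNorm_Xmat_lt_one_add_iff ha hMub hm1 hm2 hm3 hm4 hb1 hb2
  rw [← hXM]
  constructor
  · intro h
    have hX0 : ‖a 0‖ ≤ oneNorm (Xmat n b a) :=
      (Xmat_colSum_last a (j := ⟨n - 1, by omega⟩) rfl).symm.trans_le (le_oneNorm _ _)
    have hXF := h.trans_le ((min_le_right _ _).trans (oneNorm_Frob_le a hMub))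
    exact (lt_max_iff.mp hXF).resolve_left hX0.not_gt
  · intro h
    have h0 : 1 < ‖a 0‖ := (hXM.mp h).1
    calc oneNorm (Xmat n b a) < 1 + M := h
      _ = min 1 ‖a 0‖ + ‖a m‖ := by rw [min_eq_left h0.le, hm3]
      _ ≤ NN (Frob n a) := min_one_add_le_NN_Frob a ⟨hm1, hm2⟩

/-- with `M = max{|a_k| : 1 ≤ k ≤ n-1}` and
`m = max{k ∈ {1, …, n-1} : |a_k| = M}`, for `1 ≤ b ≤ n-2` one has
`‖X_b‖_1 < N(F)` if and only if `1 < |a_0| < 1 + M`, `m ≤ b`, and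
`|a_{b+1}| + |a_b|/|a_0| < M`. -/
theorem stmt18 (n : ℕ) (hn : 3 ≤ n) (a : ℕ → ℂ) (ha : a 0 ≠ 0) (M : ℝ)
    (hM : IsGreatest ((fun k => ‖a k‖) '' (Set.Icc 1 (n - 1))) M)
    (m : ℕ) (hm1 : 1 ≤ m) (hm2 : m ≤ n - 1) (hm3 : ‖a m‖ = M)
    (hm4 : ∀ k : ℕ, 1 ≤ k → k ≤ n - 1 → ‖a k‖ = M → k ≤ m)
    (b : ℕ) (hb1 : 1 ≤ b) (hb2 : b ≤ n - 2) :
    oneNorm (Xmat n b a) < NN (Frob n a) ↔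
      1 < ‖a 0‖ ∧ ‖a 0‖ < 1 + M ∧ m ≤ b ∧
        ‖a (b + 1)‖ + ‖a b‖ / ‖a 0‖ < M :=
  stmt18_general n a ha M hM m hm1 hm2 hm3 hm4 b hb1 hb2

end
end

section
/- Suppose n ≥ 3, 1 ≤ b ≤ n−2, and |a_0| > 1. Then ‖W‖_∞ / ‖X_b‖_1 ≤ 2 − 1/|a_0|, i.e., ‖W‖_∞ ≤ (2 − 1/|a_0|)·‖X_b‖_1. -/
noncomputable section

/-!
With 0-based indices and `M = ‖X_b‖_1`, every row sum of `W` is bounded by a column sum of `X_b`.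
Row `0` of `W` sums to `|a_{n-1}| + |a_0|`, and columns `n-1` and `0` of `X_b` give
`M ≥ |a_0|` and `M ≥ |a_{n-1}| + 1`, hence
`(2 - 1/|a_0|) M ≥ (|a_{n-1}| + 1) + (1 - 1/|a_0|) |a_0| = |a_{n-1}| + |a_0|`.
Row `1` sums to `1 < |a_0| ≤ M`. Row `i + 2` sums to `1 + |a_{i+1}|/|a_0|`; column `n-3-i` of `X_b`
holds `1` and `a_{i+1}/a_0` when `i < b`, and otherwise column `n-2-i` holds `1` and `-a_{i+1}`.
So all rows but row `0` are bounded by `M` itself.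
-/

theorem sum_norm_le_oneNorm {n : ℕ} (A : Matrix (Fin n) (Fin n) ℂ) (j : Fin n) :
    ∑ i, ‖A i j‖ ≤ oneNorm A :=
  le_ciSup (f := fun j ↦ ∑ i, ‖A i j‖) (Set.finite_range _).bddAbove j

theorem norm_le_oneNorm {n : ℕ} (A : Matrix (Fin n) (Fin n) ℂ) (i j : Fin n) :
    ‖A i j‖ ≤ oneNorm A :=
  (Finset.single_le_sum (fun k _ ↦ norm_nonneg (A k j)) (Finset.mem_univ i)).trans
    (sum_norm_le_oneNorm A j)

theorem norm_add_norm_le_oneNorm {n : ℕ} (A : Matrix (Fin n) (Fin n) ℂ) {i i' : Fin n}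
    (h : i ≠ i') (j : Fin n) : ‖A i j‖ + ‖A i' j‖ ≤ oneNorm A :=
  (Finset.add_le_sum (fun k _ ↦ norm_nonneg (A k j)) (Finset.mem_univ i) (Finset.mem_univ i')
    h).trans (sum_norm_le_oneNorm A j)

section Wmat

variable {n : ℕ} (a : ℕ → ℂ)

theorem sum_norm_Wmat_row_zero (hn : 2 ≤ n) :
    ∑ j, ‖Wmat n a ⟨0, by omega⟩ j‖ = ‖a (n - 1)‖ + ‖a 0‖ := by
  rw [Fintype.sum_eq_add ⟨0, by omega⟩ ⟨n - 1, by omega⟩ (by simp [Fin.ext_iff]; omega)]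
  · have h₀ : Wmat n a ⟨0, by omega⟩ ⟨0, by omega⟩ = -a (n - 1) := by
      dsimp only [Wmat, Matrix.of_apply]; grind
    have h₁ : Wmat n a ⟨0, by omega⟩ ⟨n - 1, by omega⟩ = -a 0 := by
      dsimp only [Wmat, Matrix.of_apply]; grind
    rw [h₀, h₁, norm_neg, norm_neg]
  · rintro ⟨j, hj⟩ ⟨hj₀, hj₁⟩
    simp only [ne_eq, Fin.ext_iff] at hj₀ hj₁
    rw [norm_eq_zero]
    dsimp only [Wmat, Matrix.of_apply]; grind

theorem sum_norm_Wmat_row_one (hn : 2 ≤ n) : ∑ j, ‖Wmat n a ⟨1, hn⟩ j‖ = 1 := by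
  rw [Fintype.sum_eq_single ⟨0, by omega⟩]
  · simp [Wmat]
  · rintro ⟨j, hj⟩ hj₀
    simp only [ne_eq, Fin.ext_iff] at hj₀
    rw [norm_eq_zero]
    dsimp only [Wmat, Matrix.of_apply]; grind

theorem sum_norm_Wmat_row_add_two (i : ℕ) (hi : i + 2 < n) :
    ∑ j, ‖Wmat n a ⟨i + 2, hi⟩ j‖ = 1 + ‖a (i + 1)‖ / ‖a 0‖ := by
  rw [Fintype.sum_eq_add ⟨i + 1, by omega⟩ ⟨0, by omega⟩ (by simp [Fin.ext_iff])]
  · have h₀ : Wmat n a ⟨i + 2, hi⟩ ⟨i + 1, by omega⟩ = 1 := by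
      dsimp only [Wmat, Matrix.of_apply]; grind
    have h₁ : Wmat n a ⟨i + 2, hi⟩ ⟨0, by omega⟩ = a (i + 1) / a 0 := by
      dsimp only [Wmat, Matrix.of_apply]; grind
    rw [h₀, h₁, norm_one, norm_div]
  · rintro ⟨j, hj⟩ ⟨hj₀, hj₁⟩
    simp only [ne_eq, Fin.ext_iff] at hj₀ hj₁
    rw [norm_eq_zero]
    dsimp only [Wmat, Matrix.of_apply]; grind

end Wmat

section Xmat

variable {n b : ℕ} (a : ℕ → ℂ)

theorem norm_coeff_zero_le_oneNorm_Xmat (hn : 1 ≤ n) : ‖a 0‖ ≤ oneNorm (Xmat n b a) := by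
  have h : Xmat n b a ⟨0, hn⟩ ⟨n - 1, by omega⟩ = -a 0 := by
    dsimp only [Xmat, Matrix.of_apply]; grind
  simpa [h] using norm_le_oneNorm (Xmat n b a) ⟨0, hn⟩ ⟨n - 1, by omega⟩

theorem norm_add_one_le_oneNorm_Xmat (hb : 1 ≤ b) (k : ℕ) (hbk : b + 1 ≤ k) (hkn : k < n) :
    ‖a k‖ + 1 ≤ oneNorm (Xmat n b a) := by
  have h₀ : Xmat n b a ⟨0, by omega⟩ ⟨n - 1 - k, by omega⟩ = -a k := by
    dsimp only [Xmat, Matrix.of_apply]; grind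
  have h₁ : Xmat n b a ⟨n - k, by omega⟩ ⟨n - 1 - k, by omega⟩ = 1 := by
    dsimp only [Xmat, Matrix.of_apply]; grind
  simpa [h₀, h₁] using
    norm_add_norm_le_oneNorm (Xmat n b a) (i := ⟨0, by omega⟩) (i' := ⟨n - k, by omega⟩)
      (by simp [Fin.ext_iff]; omega) ⟨n - 1 - k, by omega⟩

theorem one_add_div_le_oneNorm_Xmat (k : ℕ) (hk : 1 ≤ k) (hkb : k ≤ b) (hkn : k + 1 < n) :
    1 + ‖a k‖ / ‖a 0‖ ≤ oneNorm (Xmat n b a) := by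
  have h₀ : Xmat n b a ⟨n - 1 - k, by omega⟩ ⟨n - 2 - k, by omega⟩ = 1 := by
    dsimp only [Xmat, Matrix.of_apply]; grind
  have h₁ : Xmat n b a ⟨n - 1, by omega⟩ ⟨n - 2 - k, by omega⟩ = a k / a 0 := by
    dsimp only [Xmat, Matrix.of_apply]; grind
  simpa [h₀, h₁] using
    norm_add_norm_le_oneNorm (Xmat n b a) (i := ⟨n - 1 - k, by omega⟩) (i' := ⟨n - 1, by omega⟩)
      (by simp [Fin.ext_iff]; omega) ⟨n - 2 - k, by omega⟩

theorem sum_norm_Wmat_row_add_two_le_oneNorm_Xmat (hb : 1 ≤ b) (ha : 1 ≤ ‖a 0‖) (i : ℕ)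
    (hi : i + 2 < n) : ∑ j, ‖Wmat n a ⟨i + 2, hi⟩ j‖ ≤ oneNorm (Xmat n b a) := by
  rw [sum_norm_Wmat_row_add_two]
  rcases lt_or_ge i b with hib | hbi
  · exact one_add_div_le_oneNorm_Xmat a (i + 1) (by omega) hib hi
  · have hcol := norm_add_one_le_oneNorm_Xmat (n := n) a hb (i + 1) (by omega) (by omega)
    have hdiv : ‖a (i + 1)‖ / ‖a 0‖ ≤ ‖a (i + 1)‖ := div_le_self (norm_nonneg _) ha
    linarith

end Xmat

theorem add_le_two_sub_one_div_mul {t α M : ℝ} (hα : 1 < α) (hαM : α ≤ M) (htM : t + 1 ≤ M) :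
    t + α ≤ (2 - 1 / α) * M := by
  have h : (1 - 1 / α) * α ≤ (1 - 1 / α) * M :=
    mul_le_mul_of_nonneg_left hαM (sub_nonneg.2 ((div_le_one (by linarith)).2 hα.le))
  have hα' : (1 - 1 / α) * α = α - 1 := by field_simp
  linarith

theorem stmt19_general (n : ℕ) (hn : 3 ≤ n) (a : ℕ → ℂ)
    (b : ℕ) (hb1 : 1 ≤ b) (hb2 : b ≤ n - 2)
    (ha0 : 1 < ‖a 0‖) :
    infNorm (Wmat n a) ≤ (2 - 1 / ‖a 0‖) * oneNorm (Xmat n b a) := by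
  have hαM : ‖a 0‖ ≤ oneNorm (Xmat n b a) := norm_coeff_zero_le_oneNorm_Xmat a (by omega)
  have hM : oneNorm (Xmat n b a) ≤ (2 - 1 / ‖a 0‖) * oneNorm (Xmat n b a) :=
    le_mul_of_one_le_left (by linarith) (by linarith [(div_le_one (by linarith)).2 ha0.le])
  have : Nonempty (Fin n) := ⟨⟨0, by omega⟩⟩
  refine ciSup_le fun ⟨i, hi⟩ ↦ ?_
  match i, hi with
  | 0, _ =>
    rw [sum_norm_Wmat_row_zero a (by omega)]
    exact add_le_two_sub_one_div_mul ha0 hαM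
      (norm_add_one_le_oneNorm_Xmat a hb1 (n - 1) (by omega) (by omega))
  | 1, _ => rw [sum_norm_Wmat_row_one a (by omega)]; linarith
  | i + 2, hi => exact (sum_norm_Wmat_row_add_two_le_oneNorm_Xmat a hb1 ha0.le i hi).trans hM

/-- if `n ≥ 3`, `1 ≤ b ≤ n-2`, and `|a_0| > 1`, then
`‖W‖_∞ ≤ (2 - 1/|a_0|)·‖X_b‖_1`. -/
theorem stmt19 (n : ℕ) (hn : 3 ≤ n) (a : ℕ → ℂ) (ha : a 0 ≠ 0)
    (b : ℕ) (hb1 : 1 ≤ b) (hb2 : b ≤ n - 2)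
    (ha0 : 1 < ‖a 0‖) :
    infNorm (Wmat n a) ≤ (2 - 1 / ‖a 0‖) * oneNorm (Xmat n b a) :=
  stmt19_general n hn a b hb1 hb2 ha0

end
end
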